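/- The η/SP-expansion relation →_E, the compatible closure of the axioms (η̄): M ▷ λx.(M x) for x ∉ FV(M) and (S̄P): M ▷ ⟨π₁M, π₂M⟩, is confluent. -/

import Mathlib

/-- Untyped lambda terms with pairing and projections, de Bruijn representation
(so terms are automatically identified up to alpha-equivalence). -/
inductive Tm : Type
  | var : Nat → Tm
  | app : Tm → Tm → Tm
  | lam : Tm → Tm
  | pair : Tm → Tm → Tm
  | p1 : Tm → Tm
  | p2 : Tm → Tm

/-- Shift free de Bruijn indices ≥ d up by one. -/
def Tm.lift (d : Nat) : Tm → Tm
  | .var n => if n < d then .var n else .var (n + 1)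
  | .app a b => .app (a.lift d) (b.lift d)
  | .lam a => .lam (a.lift (d + 1))
  | .pair a b => .pair (a.lift d) (b.lift d)
  | .p1 a => .p1 (a.lift d)
  | .p2 a => .p2 (a.lift d)

/-- Capture-avoiding substitution of s for variable k. -/
def Tm.subst : Tm → Nat → Tm → Tm
  | .var n, k, s => if n = k then s else if n < k then .var n else .var (n - 1)
  | .app a b, k, s => .app (a.subst k s) (b.subst k s)
  | .lam a, k, s => .lam (a.subst (k + 1) (s.lift 0))
  | .pair a b, k, s => .pair (a.subst k s) (b.subst k s)
  | .p1 a, k, s => .p1 (a.subst k s)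
  | .p2 a, k, s => .p2 (a.subst k s)

/-- One-step η/SP-expansion: compatible closure of (η̄) and (S̄P). -/
inductive StepE : Tm → Tm → Prop
  | eta {M} : StepE M (.lam (.app (M.lift 0) (.var 0)))
  | sp {M} : StepE M (.pair (.p1 M) (.p2 M))
  | lam {M M'} : StepE M M' → StepE (.lam M) (.lam M')
  | appL {M M' N} : StepE M M' → StepE (.app M N) (.app M' N)
  | appR {M N N'} : StepE N N' → StepE (.app M N) (.app M N')
  | pairL {M M' N} : StepE M M' → StepE (.pair M N) (.pair M' N)
  | pairR {M N N'} : StepE N N' → StepE (.pair M N) (.pair M N')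
  | p1 {M M'} : StepE M M' → StepE (.p1 M) (.p1 M')
  | p2 {M M'} : StepE M M' → StepE (.p2 M) (.p2 M')

/-! Parallel expansion `Par` has the diamond property: when one side expands `a` at the root,
the other side `c` closes the diagram by expanding itself at the root, because `Par a c` lifts
through the η̄- and S̄P-contexts (for η̄ this needs `Par` to commute with de Bruijn lifting).
As `→_E ⊆ Par ⊆ →_E*`, confluence of `→_E` is the Church–Rosser consequence of this diamond. -/

open Relation

theorem Tm.lift_lift (t : Tm) {i j : ℕ} (h : i ≤ j) :
    (t.lift j).lift i = (t.lift i).lift (j + 1) := by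
  induction t generalizing i j with
  | var n =>
    simp only [Tm.lift]
    split_ifs <;> simp only [Tm.lift] <;> split_ifs <;> first | rfl | omega
  | app a b iha ihb => simp only [Tm.lift, iha h, ihb h]
  | lam a iha => simp only [Tm.lift, iha (Nat.succ_le_succ h)]
  | pair a b iha ihb => simp only [Tm.lift, iha h, ihb h]
  | p1 a iha => simp only [Tm.lift, iha h]
  | p2 a iha => simp only [Tm.lift, iha h]

inductive Par : Tm → Tm → Prop
  | var (n : ℕ) : Par (.var n) (.var n)
  | eta {M : Tm} : Par M (.lam (.app (M.lift 0) (.var 0)))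
  | sp {M : Tm} : Par M (.pair (.p1 M) (.p2 M))
  | app {a a' b b' : Tm} : Par a a' → Par b b' → Par (.app a b) (.app a' b')
  | lam {a a' : Tm} : Par a a' → Par (.lam a) (.lam a')
  | pair {a a' b b' : Tm} : Par a a' → Par b b' → Par (.pair a b) (.pair a' b')
  | p1 {a a' : Tm} : Par a a' → Par (.p1 a) (.p1 a')
  | p2 {a a' : Tm} : Par a a' → Par (.p2 a) (.p2 a')

namespace Par

theorem refl : ∀ t : Tm, Par t t
  | .var n => .var n
  | .app a b => .app (refl a) (refl b)
  | .lam a => .lam (refl a)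
  | .pair a b => .pair (refl a) (refl b)
  | .p1 a => .p1 (refl a)
  | .p2 a => .p2 (refl a)

theorem lift {M N : Tm} (h : Par M N) (d : ℕ) : Par (M.lift d) (N.lift d) := by
  induction h generalizing d with
  | var n => exact refl _
  | @eta M =>
    simp only [Tm.lift, if_pos (Nat.succ_pos d), ← Tm.lift_lift M (Nat.zero_le d)]
    exact .eta
  | sp => exact .sp
  | app _ _ ih₁ ih₂ => exact .app (ih₁ d) (ih₂ d)
  | lam _ ih => exact .lam (ih (d + 1))
  | pair _ _ ih₁ ih₂ => exact .pair (ih₁ d) (ih₂ d)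
  | p1 _ ih => exact .p1 (ih d)
  | p2 _ ih => exact .p2 (ih d)

theorem etaExpand {M N : Tm} (h : Par M N) :
    Par (.lam (.app (M.lift 0) (.var 0))) (.lam (.app (N.lift 0) (.var 0))) :=
  .lam (.app (h.lift 0) (.var 0))

theorem spExpand {M N : Tm} (h : Par M N) : Par (.pair (.p1 M) (.p2 M)) (.pair (.p1 N) (.p2 N)) :=
  .pair (.p1 h) (.p2 h)

theorem diamond : ∀ {a b c : Tm}, Par a b → Par a c → ∃ d, Par b d ∧ Par c d
  | _, _, _, .eta, hc => ⟨_, hc.etaExpand, .eta⟩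
  | _, _, _, .sp, hc => ⟨_, hc.spExpand, .sp⟩
  | _, _, _, hb, .eta => ⟨_, .eta, hb.etaExpand⟩
  | _, _, _, hb, .sp => ⟨_, .sp, hb.spExpand⟩
  | _, _, _, .var n, .var _ => ⟨_, .var n, .var n⟩
  | _, _, _, .app hb₁ hb₂, .app hc₁ hc₂ =>
    let ⟨_, hb₁', hc₁'⟩ := diamond hb₁ hc₁
    let ⟨_, hb₂', hc₂'⟩ := diamond hb₂ hc₂
    ⟨_, .app hb₁' hb₂', .app hc₁' hc₂'⟩
  | _, _, _, .lam hb, .lam hc =>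
    let ⟨_, hb', hc'⟩ := diamond hb hc
    ⟨_, .lam hb', .lam hc'⟩
  | _, _, _, .pair hb₁ hb₂, .pair hc₁ hc₂ =>
    let ⟨_, hb₁', hc₁'⟩ := diamond hb₁ hc₁
    let ⟨_, hb₂', hc₂'⟩ := diamond hb₂ hc₂
    ⟨_, .pair hb₁' hb₂', .pair hc₁' hc₂'⟩
  | _, _, _, .p1 hb, .p1 hc =>
    let ⟨_, hb', hc'⟩ := diamond hb hc
    ⟨_, .p1 hb', .p1 hc'⟩
  | _, _, _, .p2 hb, .p2 hc =>
    let ⟨_, hb', hc'⟩ := diamond hb hc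
    ⟨_, .p2 hb', .p2 hc'⟩

end Par

theorem StepE.par {M N : Tm} (h : StepE M N) : Par M N := by
  induction h with
  | eta => exact .eta
  | sp => exact .sp
  | lam _ ih => exact .lam ih
  | appL _ ih => exact .app ih (.refl _)
  | appR _ ih => exact .app (.refl _) ih
  | pairL _ ih => exact .pair ih (.refl _)
  | pairR _ ih => exact .pair (.refl _) ih
  | p1 _ ih => exact .p1 ih
  | p2 _ ih => exact .p2 ih

theorem Par.reflTransGen_stepE {M N : Tm} (h : Par M N) : ReflTransGen StepE M N := by
  induction h with
  | var => exact .refl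
  | eta => exact .single .eta
  | sp => exact .single .sp
  | @app a a' b b' _ _ ih₁ ih₂ =>
    exact (ih₁.lift (Tm.app · b) fun _ _ ↦ .appL).trans (ih₂.lift (Tm.app a') fun _ _ ↦ .appR)
  | lam _ ih => exact ih.lift Tm.lam fun _ _ ↦ .lam
  | @pair a a' b b' _ _ ih₁ ih₂ =>
    exact (ih₁.lift (Tm.pair · b) fun _ _ ↦ .pairL).trans (ih₂.lift (Tm.pair a') fun _ _ ↦ .pairR)
  | p1 _ ih => exact ih.lift Tm.p1 fun _ _ ↦ .p1
  | p2 _ ih => exact ih.lift Tm.p2 fun _ _ ↦ .p2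

theorem reflTransGen_par_eq_reflTransGen_stepE : ReflTransGen Par = ReflTransGen StepE :=
  le_antisymm (ReflTransGen.lift' id fun _ _ ↦ Par.reflTransGen_stepE)
    (ReflTransGen.mono fun _ _ ↦ StepE.par)

/-- The η/SP-expansion relation →_E is confluent. -/
theorem stepE_confluent (M N₁ N₂ : Tm)
    (h₁ : Relation.ReflTransGen StepE M N₁) (h₂ : Relation.ReflTransGen StepE M N₂) :
    ∃ P, Relation.ReflTransGen StepE N₁ P ∧ Relation.ReflTransGen StepE N₂ P := by
  rw [← reflTransGen_par_eq_reflTransGen_stepE] at h₁ h₂ ⊢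
  exact church_rosser (fun _ _ _ hb hc ↦ (Par.diamond hb hc).imp fun _ hd ↦
    ⟨.single hd.1, .single hd.2⟩) h₁ h₂
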